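/- arXiv:math/0304403 — 5 statements merged into one kernel-verified Lean document; each statement's English description precedes it below -/
import Mathlib

section
/- For all integers n ≥ 0 and d ≥ 1, the following identity of rational numbers holds: Σ_{m=0}^{d} C(d,m)^n · [ ((n−1)·γ(m) + γ(d) − γ(d−m))·(d − 2m) + 2m/d ] = (1/2) · Σ_{m=0}^{d} C(d,m)^n · [ n·(γ(m) − γ(d−m))·(d − 2m) + 2 ]. -/
open Finset

/-- `gam m` is the `m`-th harmonic number `γ(m) = Σ_{j=1}^m 1/j`, with `γ(0) = 0`. -/
def gam (m : ℕ) : ℚ := ∑ j ∈ Finset.range m, (1 : ℚ) / (j + 1)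

/-- The symmetrization step in the proof of Proposition 3.5: for integers `n ≥ 0` and `d ≥ 1`,
`Σ_{m=0}^d C(d,m)^n (((n-1)γ(m) + γ(d) - γ(d-m))(d - 2m) + 2m/d)
  = (1/2) Σ_{m=0}^d C(d,m)^n (n (γ(m) - γ(d-m))(d - 2m) + 2)`. -/
theorem symmetrization_identity (n d : ℕ) (hd : 1 ≤ d) :
    ∑ m ∈ Finset.range (d + 1), (d.choose m : ℚ) ^ n *
        ((((n : ℚ) - 1) * gam m + gam d - gam (d - m)) * ((d : ℚ) - 2 * m)
          + 2 * m / d) =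
    (1 / 2) * ∑ m ∈ Finset.range (d + 1), (d.choose m : ℚ) ^ n *
        ((n : ℚ) * (gam m - gam (d - m)) * ((d : ℚ) - 2 * m) + 2) := by
  have hd0 : (d : ℚ) ≠ 0 := by positivity
  set f : ℕ → ℚ := fun m => (d.choose m : ℚ) ^ n *
      ((((n : ℚ) - 1) * gam m + gam d - gam (d - m)) * ((d : ℚ) - 2 * m)
        + 2 * m / d) with hf
  have hrefl : ∑ m ∈ Finset.range (d + 1), f m
      = ∑ m ∈ Finset.range (d + 1), f (d - m) := by
    rw [← Finset.sum_range_reflect]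
    simp
  have key : ∀ m ∈ Finset.range (d + 1),
      f m + f (d - m) = (d.choose m : ℚ) ^ n *
        ((n : ℚ) * (gam m - gam (d - m)) * ((d : ℚ) - 2 * m) + 2) := by
    intro m hm
    have hmd : m ≤ d := Nat.lt_succ_iff.mp (Finset.mem_range.mp hm)
    have h1 : d - (d - m) = m := Nat.sub_sub_self hmd
    have h3 : ((d - m : ℕ) : ℚ) = (d : ℚ) - m := by
      push_cast [hmd]; ring
    rw [hf]
    simp only [h1, Nat.choose_symm hmd, h3]
    field_simp
    ring
  calc ∑ m ∈ Finset.range (d + 1), f m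
      = (1/2) * ∑ m ∈ Finset.range (d + 1), (f m + f (d - m)) := by
        rw [Finset.sum_add_distrib, ← hrefl]; ring
    _ = (1 / 2) * ∑ m ∈ Finset.range (d + 1), (d.choose m : ℚ) ^ n *
        ((n : ℚ) * (gam m - gam (d - m)) * ((d : ℚ) - 2 * m) + 2) := by
        rw [Finset.sum_congr rfl key]
end

section
/- Fix integers 1 ≤ r ≤ n. Let R be a commutative ring and c ∈ R. Then for every integer k with n − r + 1 ≤ k ≤ n − 1, the polynomial h_k · Δ lies in the ideal I_P(c) of R[x₁,…,x_r] generated by x₁^n − c, …, x_r^n − c. -/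
open Finset MvPolynomial

/-- The complete homogeneous symmetric polynomial of degree `k` in the variables
`x₁, …, x_r`: the sum of all monomials of total degree `k`. -/
noncomputable def hsymm (R : Type*) [CommRing R] (r k : ℕ) : MvPolynomial (Fin r) R :=
  ∑ d ∈ (Fintype.piFinset fun _ : Fin r => Finset.range (k + 1)).filter
      (fun d => ∑ i, d i = k),
    ∏ i, X i ^ d i

/-- The Vandermonde determinant `Δ = ∏_{1 ≤ i < j ≤ r} (xᵢ - xⱼ)`. -/
noncomputable def vander (R : Type*) [CommRing R] (r : ℕ) : MvPolynomial (Fin r) R :=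
  ∏ p ∈ Finset.univ.filter (fun p : Fin r × Fin r => p.1 < p.2), (X p.1 - X p.2)

/-- The ideal `I_P(c) = ⟨x₁ⁿ - c, …, x_rⁿ - c⟩` of `R[x₁,…,x_r]`. -/
noncomputable def IP (R : Type*) [CommRing R] (r n : ℕ) (c : R) :
    Ideal (MvPolynomial (Fin r) R) :=
  Ideal.span (Set.range fun i : Fin r => X i ^ n - C c)

/-!
Let `H(t) = ∏ᵢ (1 - xᵢ t)⁻¹ = ∑ₖ h_k tᵏ`. Comparing coefficients in
`∏_{i ≠ j} (1 - xᵢ t) · H(t) = (1 - x_j t)⁻¹` factors every alternant `det (x_j ^ μ_t)`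
as `E · H_μ`, where `E` does not depend on `μ` and `H_μ = (h_{μ_t - s})_{s,t}` is upper
triangular as soon as `μ_t = t` for `t < r - 1`. For the exponents `0, 1, …, r - 2, k + r - 1`
this gives `det (x_j ^ μ_t) = h_k · det (x_j ^ t) = ± h_k Δ`. Modulo `I_P(c)` we have
`x_j ^ (k + r - 1) = c · x_j ^ e` with `e = k + r - 1 - n ≤ r - 2`, so the last column of the
alternant becomes a multiple of the column with exponent `e`, and the alternant vanishes.
-/

theorem PowerSeries.one_sub_C_mul_X_mul_mk_pow {A : Type*} [CommRing A] (a : A) :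
    (1 - PowerSeries.C a * PowerSeries.X) * PowerSeries.mk (a ^ ·) = 1 := by
  simpa [PowerSeries.rescale_mk, PowerSeries.rescale_X, mul_comm] using
    congrArg (PowerSeries.rescale a) (PowerSeries.mk_one_mul_one_sub_eq_one A)

theorem Polynomial.natDegree_prod_one_sub_C_mul_X_le {A ι : Type*} [CommRing A] (s : Finset ι)
    (a : ι → A) : (∏ i ∈ s, (1 - Polynomial.C (a i) * Polynomial.X)).natDegree ≤ #s := by
  refine (Polynomial.natDegree_prod_le _ _).trans ?_
  have h : ∀ i ∈ s, (1 - Polynomial.C (a i) * Polynomial.X).natDegree ≤ 1 := fun i _ =>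
    (Polynomial.natDegree_sub_le _ _).trans
      (by simpa using Polynomial.natDegree_C_mul_X_pow_le (a i) 1)
  simpa using Finset.sum_le_card_nsmul s _ 1 h

theorem PowerSeries.coeff_coe_mul_of_natDegree_lt {A : Type*} [CommRing A] {Q : Polynomial A}
    {r : ℕ} (hQ : Q.natDegree < r) (G : PowerSeries A) (p : ℕ) :
    PowerSeries.coeff p ((Q : PowerSeries A) * G) =
      ∑ s : Fin r, Q.coeff s * PowerSeries.coeff p (PowerSeries.X ^ (s : ℕ) * G) := by
  conv_lhs => rw [Q.as_sum_range' r hQ, ← Polynomial.coeToPowerSeries.ringHom_apply]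
  simp [Fin.sum_univ_eq_sum_range fun s => Q.coeff s * PowerSeries.coeff p (PowerSeries.X ^ s * G),
    Polynomial.coe_monomial, Finset.sum_mul, PowerSeries.monomial_eq_C_mul_X_pow, mul_assoc]

theorem det_coeff_X_pow_mul_update_last {A : Type*} [CommRing A] {r : ℕ} (f : PowerSeries A)
    (hf : PowerSeries.constantCoeff f = 1) (m : ℕ) :
    (Matrix.of fun s t : Fin (r + 1) => PowerSeries.coeff
        (Function.update Fin.val (Fin.last r) m t) (PowerSeries.X ^ (s : ℕ) * f)).det =
      PowerSeries.coeff m (PowerSeries.X ^ r * f) := by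
  rw [Matrix.det_of_isUpperTriangular]
  · simp [Fin.prod_univ_castSucc, Fin.castSucc_ne_last, PowerSeries.coeff_X_pow_mul', hf]
  · intro s t (hts : t < s)
    have ht : t ≠ Fin.last r := (hts.trans_le (Fin.le_last s)).ne
    rw [Matrix.of_apply, Function.update_of_ne ht, PowerSeries.coeff_X_pow_mul',
      if_neg (not_le.2 (Fin.lt_def.1 hts))]

def alternant {ι S : Type*} [CommRing S] (y : ι → S) (μ : ι → ℕ) : Matrix ι ι S :=
  Matrix.of fun j t => y j ^ μ t

theorem alternant_val {r : ℕ} {S : Type*} [CommRing S] (y : Fin r → S) :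
    alternant y Fin.val = Matrix.vandermonde y := rfl

theorem map_alternant {ι S T : Type*} [CommRing S] [CommRing T] (f : S →+* T) (y : ι → S)
    (μ : ι → ℕ) : (alternant y μ).map f = alternant (f ∘ y) μ := by
  ext; simp [alternant]

theorem det_alternant_update_last_eq_zero {S : Type*} [CommRing S] {r n e : ℕ}
    (y : Fin (r + 1) → S) (a : S) (hy : ∀ j, y j ^ n = a) (he : e < r) :
    (alternant y (Function.update Fin.val (Fin.last r) (e + n))).det = 0 := by
  set M := alternant y (Function.update Fin.val (Fin.last r) (e + n))
  have hlast : (fun j => M j (Fin.last r)) = a • fun j => M j ⟨e, by omega⟩ := by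
    ext j
    simp [M, alternant, Fin.ext_iff, he.ne, pow_add, hy, mul_comm]
  rw [← M.updateCol_eq_self (Fin.last r), hlast, Matrix.det_updateCol_smul,
    Matrix.det_zero_of_column_eq (i := Fin.last r) (j := ⟨e, by omega⟩), mul_zero]
  · simp [Fin.ext_iff, he.ne']
  · intro j; simp [Fin.ext_iff, he.ne]

section

variable (R : Type*) [CommRing R] (r : ℕ)

noncomputable def hsymmSeries : PowerSeries (MvPolynomial (Fin r) R) :=
  ∏ i, PowerSeries.mk ((X i : MvPolynomial (Fin r) R) ^ ·)

theorem constantCoeff_hsymmSeries : PowerSeries.constantCoeff (hsymmSeries R r) = 1 := by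
  simp [hsymmSeries]

theorem coeff_hsymmSeries (k : ℕ) : PowerSeries.coeff k (hsymmSeries R r) = hsymm R r k := by
  classical
  rw [hsymmSeries, PowerSeries.coeff_prod, _root_.hsymm]
  refine Finset.sum_nbij' (⇑) Finsupp.equivFunOnFinite.symm ?_ ?_
    (fun l _ => Finsupp.equivFunOnFinite.symm_apply_apply l) (fun _ _ => rfl) (fun _ _ => by simp)
  · intro l hl
    simp only [mem_finsuppAntidiag, subset_univ, and_true] at hl
    simp only [mem_filter, Fintype.mem_piFinset, mem_range, ← hl, and_true]
    exact fun i => Nat.lt_succ_of_le (Finset.single_le_sum (fun _ _ => Nat.zero_le _) (mem_univ i))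
  · intro d hd
    simp_all [mem_finsuppAntidiag]

noncomputable def esymmGenErase (j : Fin r) : Polynomial (MvPolynomial (Fin r) R) :=
  ∏ i ∈ univ.erase j, (1 - Polynomial.C (X i) * Polynomial.X)

theorem coe_esymmGenErase_mul_hsymmSeries (j : Fin r) :
    (esymmGenErase R r j : PowerSeries (MvPolynomial (Fin r) R)) * hsymmSeries R r =
      PowerSeries.mk ((X j : MvPolynomial (Fin r) R) ^ ·) := by
  rw [esymmGenErase, ← Polynomial.coeToPowerSeries.ringHom_apply, map_prod, hsymmSeries,
    ← Finset.mul_prod_erase _ _ (mem_univ j), mul_left_comm, ← Finset.prod_mul_distrib]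
  simp [PowerSeries.one_sub_C_mul_X_mul_mk_pow]

theorem alternant_X_eq_mul (μ : Fin r → ℕ) :
    alternant (X : Fin r → MvPolynomial (Fin r) R) μ =
      (Matrix.of fun j s : Fin r => (esymmGenErase R r j).coeff s) *
        Matrix.of fun s t : Fin r =>
          PowerSeries.coeff (μ t) (PowerSeries.X ^ (s : ℕ) * hsymmSeries R r) := by
  ext j t
  have hdeg : (esymmGenErase R r j).natDegree < r :=
    (Polynomial.natDegree_prod_one_sub_C_mul_X_le _ _).trans_lt (by simp [j.pos])
  simp [alternant, Matrix.mul_apply, ← PowerSeries.coeff_coe_mul_of_natDegree_lt hdeg,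
    coe_esymmGenErase_mul_hsymmSeries]

theorem det_alternant_X_update_last (k : ℕ) :
    (alternant (X : Fin (r + 1) → MvPolynomial (Fin (r + 1)) R)
        (Function.update Fin.val (Fin.last r) (k + r))).det =
      hsymm R (r + 1) k *
        (Matrix.vandermonde (X : Fin (r + 1) → MvPolynomial (Fin (r + 1)) R)).det := by
  have hdet : ∀ m, (alternant (X : Fin (r + 1) → MvPolynomial (Fin (r + 1)) R)
      (Function.update Fin.val (Fin.last r) (m + r))).det =
        (Matrix.of fun j s : Fin (r + 1) => (esymmGenErase R (r + 1) j).coeff s).det *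
          PowerSeries.coeff m (hsymmSeries R (r + 1)) := fun m => by
    rw [alternant_X_eq_mul, Matrix.det_mul,
      det_coeff_X_pow_mul_update_last _ (constantCoeff_hsymmSeries R _),
      PowerSeries.coeff_X_pow_mul]
  have hV : Matrix.vandermonde (X : Fin (r + 1) → MvPolynomial (Fin (r + 1)) R) =
      alternant X (Function.update Fin.val (Fin.last r) (0 + r)) := by
    rw [zero_add, Function.update_eq_self_iff.2 (Fin.val_last r).symm, alternant_val]
  rw [hV, hdet, hdet, coeff_hsymmSeries, PowerSeries.coeff_zero_eq_constantCoeff,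
    constantCoeff_hsymmSeries, mul_one, mul_comm]

theorem vander_eq_neg_one_pow_mul_det_vandermonde :
    vander R r = (-1) ^ #(univ.filter fun p : Fin r × Fin r => p.1 < p.2) *
      (Matrix.vandermonde (X : Fin r → MvPolynomial (Fin r) R)).det := by
  have hpairs : ∏ i : Fin r, ∏ j ∈ Ioi i, ((X j : MvPolynomial (Fin r) R) - X i) =
      ∏ p ∈ univ.filter fun p : Fin r × Fin r => p.1 < p.2, (X p.2 - X p.1) := by
    rw [Finset.prod_filter, Fintype.prod_prod_type]
    simp only [← Finset.filter_lt_eq_Ioi, Finset.prod_filter]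
  rw [vander, Matrix.det_vandermonde, hpairs, ← Finset.prod_neg]
  simp only [neg_sub]

end

theorem hk_mul_vandermonde_mem_general (n r : ℕ) (hr : 1 ≤ r)
    (R : Type*) [CommRing R] (c : R)
    (k : ℕ) (hk1 : n - r + 1 ≤ k) (hk2 : k ≤ n - 1) :
    hsymm R r k * vander R r ∈ IP R r n c := by
  obtain ⟨r, rfl⟩ : ∃ r', r = r' + 1 := ⟨r - 1, by omega⟩
  obtain ⟨e, he, hke⟩ : ∃ e, e < r ∧ k + r = e + n := ⟨k + r - n, by omega, by omega⟩
  rw [vander_eq_neg_one_pow_mul_det_vandermonde, mul_left_comm, ← det_alternant_X_update_last]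
  refine Ideal.mul_mem_left _ _ ?_
  rw [← Ideal.Quotient.eq_zero_iff_mem, RingHom.map_det, RingHom.mapMatrix_apply, map_alternant,
    hke]
  refine det_alternant_update_last_eq_zero _ (Ideal.Quotient.mk _ (C c)) (fun j => ?_) he
  rw [Function.comp_apply, ← map_pow, Ideal.Quotient.eq]
  exact Ideal.subset_span ⟨j, rfl⟩

/-- For `1 ≤ r ≤ n`, a commutative ring `R`, `c ∈ R`, and `n - r + 1 ≤ k ≤ n - 1`,
the polynomial `h_k · Δ` lies in the ideal `I_P(c) = ⟨x₁ⁿ - c, …, x_rⁿ - c⟩`. -/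
theorem hk_mul_vandermonde_mem (n r : ℕ) (hr : 1 ≤ r) (hrn : r ≤ n)
    (R : Type*) [CommRing R] (c : R)
    (k : ℕ) (hk1 : n - r + 1 ≤ k) (hk2 : k ≤ n - 1) :
    hsymm R r k * vander R r ∈ IP R r n c :=
  hk_mul_vandermonde_mem_general n r hr R c k hk1 hk2
end

section
/- Fix integers 1 ≤ r ≤ n and work over ℂ[q]. Set c := (−1)^{r−1}·q. Let f ∈ ℂ[q][x₁,…,x_r] be such that for every permutation w ∈ S_r (acting by permuting the variables x₁,…,x_r), the polynomial w·f − sgn(w)·f lies in the ideal I_P(c) generated by x₁^n − c, …, x_r^n − c. Then there exists P ∈ ℂ[q][x₁,…,x_r], symmetric in x₁,…,x_r, such that f − P·Δ ∈ I_P(c). -/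
/-!
Summing `sgn(w) · (w·f)` over `S_r` gives an alternating polynomial congruent to `r! · f` modulo
the ideal. Over a domain of characteristic `≠ 2` an alternating polynomial vanishes under the
substitution `x_b ↦ x_a`, so it is divisible by each `x_a - x_b`; these are pairwise non-associated
primes, hence their product `Δ` divides it, and the quotient is symmetric because `Δ` is itself
alternating. Dividing by `r!` gives `P`.
-/

open Finset MvPolynomial

open Equiv

theorem Finset.prod_dvd_of_prime_of_pairwise_not_dvd {ι M₀ : Type*} [CommMonoidWithZero M₀]
    [IsCancelMulZero M₀] {s : Finset ι} {f : ι → M₀} {n : M₀} (hp : ∀ i ∈ s, Prime (f i))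
    (hs : (s : Set ι).Pairwise fun i j => ¬f i ∣ f j) (hn : ∀ i ∈ s, f i ∣ n) :
    ∏ i ∈ s, f i ∣ n := by
  classical
  induction s using Finset.induction_on generalizing n with
  | empty => simp
  | insert a s ha ih =>
    obtain ⟨m, rfl⟩ := hn a (mem_insert_self a s)
    rw [prod_insert ha]
    refine mul_dvd_mul_left _ (ih (fun i hi => hp i (mem_insert_of_mem hi))
      (hs.mono (by simp)) fun i hi => ?_)
    exact ((hp i (mem_insert_of_mem hi)).dvd_or_dvd (hn i (mem_insert_of_mem hi))).resolve_left
      (hs (by simp [hi]) (by simp) (ne_of_mem_of_not_mem hi ha))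

namespace MvPolynomial

variable {σ R : Type*} [CommRing R]

theorem prime_X_sub_X [IsDomain R] {a b : σ} (hab : a ≠ b) :
    Prime (X a - X b : MvPolynomial σ R) := by
  classical
  let e : MvPolynomial σ R ≃ₐ[R] Polynomial (MvPolynomial {c // c ≠ b} R) :=
    (renameEquiv R (optionSubtypeNe b).symm).trans (optionEquivLeft R _)
  have he : e (X a - X b) = -(Polynomial.X - Polynomial.C (X ⟨a, hab⟩)) := by
    simp [e, optionSubtypeNe_symm_of_ne hab, optionEquivLeft_X_some, optionEquivLeft_X_none]
  rw [← MulEquiv.prime_iff e.toMulEquiv]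
  simpa [he] using (Polynomial.prime_X_sub_C (X ⟨a, hab⟩ : MvPolynomial {c // c ≠ b} R)).neg

theorem X_sub_X_dvd_iff [DecidableEq σ] {a b : σ} {p : MvPolynomial σ R} :
    X a - X b ∣ p ↔ aeval (Function.update (X (R := R)) b (X a)) p = 0 := by
  constructor
  · rintro ⟨q, rfl⟩
    simp only [map_mul, map_sub, aeval_X, Function.update_apply]
    split_ifs <;> simp_all
  · intro hp
    have hmk : (Ideal.Quotient.mkₐ R (Ideal.span {X a - X b})).comp
        (aeval (Function.update X b (X a))) = Ideal.Quotient.mkₐ R (Ideal.span {X a - X b}) := by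
      refine algHom_ext fun m => ?_
      rcases eq_or_ne m b with rfl | hmb
      · simp [Ideal.Quotient.mk_eq_mk_iff_sub_mem]
      · simp [hmb]
    rw [← Ideal.mem_span_singleton, ← Ideal.Quotient.eq_zero_iff_mem, ← Ideal.Quotient.mkₐ_eq_mk R,
      ← DFunLike.congr_fun hmk p, AlgHom.comp_apply, hp, map_zero]

section Alternating

variable [Fintype σ] [DecidableEq σ]

def IsAlternating (p : MvPolynomial σ R) : Prop :=
  ∀ w : Perm σ, rename w p = (Perm.sign w : ℤ) • p

theorem IsAlternating.X_sub_X_dvd [IsDomain R] [NeZero (2 : R)] {p : MvPolynomial σ R}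
    (hp : IsAlternating p) {a b : σ} (hab : a ≠ b) : X a - X b ∣ p := by
  set φ := Function.update (X (R := R)) b (X a)
  have hφ : φ ∘ swap a b = φ := by
    funext m
    rcases eq_or_ne m a with rfl | hma
    · simp [φ, hab]
    rcases eq_or_ne m b with rfl | hmb
    · simp [φ, hab]
    · simp [swap_apply_of_ne_of_ne hma hmb]
  -- the transposition `(a b)` changes the sign of `p` but not its image under `aeval φ`
  have h : aeval φ p = -aeval φ p := by
    conv_lhs => rw [← hφ, ← aeval_rename, hp, Perm.sign_swap hab]
    simp
  have h2 : (2 : MvPolynomial σ R) * aeval φ p = 0 := by linear_combination h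
  rw [X_sub_X_dvd_iff]
  refine (mul_eq_zero.mp h2).resolve_left ?_
  rw [← map_ofNat C 2]
  exact C_ne_zero.mpr two_ne_zero

noncomputable def antisymmetrization (p : MvPolynomial σ R) : MvPolynomial σ R :=
  ∑ w : Perm σ, (Perm.sign w : ℤ) • rename w p

theorem isAlternating_antisymmetrization (p : MvPolynomial σ R) :
    IsAlternating (antisymmetrization p) := by
  intro v
  simp only [antisymmetrization, map_sum, map_zsmul, rename_rename, smul_sum]
  refine Fintype.sum_equiv (Equiv.mulLeft v) _ _ fun w => ?_
  rw [coe_mulLeft, Perm.coe_mul, smul_smul, ← Units.val_mul, Perm.sign_mul, ← mul_assoc,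
    Int.units_mul_self, one_mul]

theorem antisymmetrization_sub_nsmul_mem {I : Ideal (MvPolynomial σ R)} {p : MvPolynomial σ R}
    (hp : ∀ w : Perm σ, rename w p - (Perm.sign w : ℤ) • p ∈ I) :
    antisymmetrization p - (Fintype.card σ).factorial • p ∈ I := by
  have h : antisymmetrization p - (Fintype.card σ).factorial • p =
      ∑ w : Perm σ, (Perm.sign w : ℤ) • (rename w p - (Perm.sign w : ℤ) • p) := by
    simp only [smul_sub, smul_smul, ← Units.val_mul, Int.units_mul_self, Units.val_one, one_smul,
      sum_sub_distrib, sum_const, card_univ, Fintype.card_perm,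
      antisymmetrization]
  rw [h]
  exact I.sum_mem fun w _ => zsmul_mem (hp w) _

end Alternating

section Vandermonde

variable {r : ℕ}

theorem vander_eq_neg_one_pow_mul_det_vandermonde :
    vander R r = (-1) ^ #(univ.filter fun p : Fin r × Fin r => p.1 < p.2) *
      (Matrix.vandermonde (X : Fin r → MvPolynomial (Fin r) R)).det := by
  have h : ∏ i : Fin r, ∏ j ∈ Ioi i, (X j - X i : MvPolynomial (Fin r) R) =
      ∏ p ∈ univ.filter (fun p : Fin r × Fin r => p.1 < p.2), (X p.2 - X p.1) := by
    simp [prod_filter, Fintype.prod_prod_type, ← filter_lt_eq_Ioi]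
  simp only [vander, Matrix.det_vandermonde, h, ← prod_neg, neg_sub]

theorem isAlternating_det_vandermonde :
    IsAlternating (Matrix.vandermonde (X : Fin r → MvPolynomial (Fin r) R)).det := by
  intro w
  have h : (rename w).mapMatrix (Matrix.vandermonde (X : Fin r → MvPolynomial (Fin r) R)) =
      (Matrix.vandermonde X).submatrix w id := by
    ext i j
    simp [Matrix.vandermonde_apply]
  rw [AlgHom.map_det, h, Matrix.det_permute, zsmul_eq_mul]

theorem isAlternating_vander : IsAlternating (vander R r) := by
  intro w
  rw [vander_eq_neg_one_pow_mul_det_vandermonde, map_mul, isAlternating_det_vandermonde w,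
    mul_smul_comm]
  simp

theorem vander_ne_zero [IsDomain R] : vander R r ≠ 0 :=
  prod_ne_zero_iff.mpr fun _ hp => (prime_X_sub_X (mem_filter.mp hp).2.ne).ne_zero

theorem IsAlternating.vander_dvd [IsDomain R] [NeZero (2 : R)] {p : MvPolynomial (Fin r) R}
    (hp : IsAlternating p) : vander R r ∣ p := by
  refine Finset.prod_dvd_of_prime_of_pairwise_not_dvd
    (fun i hi => prime_X_sub_X (mem_filter.mp hi).2.ne) ?_
    fun i hi => hp.X_sub_X_dvd (mem_filter.mp hi).2.ne
  rintro ⟨a, b⟩ hab ⟨c, d⟩ hcd hne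
  simp only [coe_filter, mem_univ, true_and, Set.mem_ofPred_eq] at hab hcd
  simp only [X_sub_X_dvd_iff, map_sub, aeval_X, Function.update_apply, sub_eq_zero]
  split_ifs <;> simp only [X_inj] <;> grind

theorem IsAlternating.exists_isSymmetric_eq_mul_vander [IsDomain R] [NeZero (2 : R)]
    {p : MvPolynomial (Fin r) R} (hp : IsAlternating p) :
    ∃ P : MvPolynomial (Fin r) R, P.IsSymmetric ∧ p = P * vander R r := by
  obtain ⟨P, rfl⟩ := hp.vander_dvd
  refine ⟨P, fun w => ?_, mul_comm _ _⟩
  have h := hp w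
  rw [map_mul, isAlternating_vander w, smul_mul_assoc] at h
  rw [← Units.smul_def, ← Units.smul_def, smul_left_cancel_iff] at h
  exact mul_left_cancel₀ vander_ne_zero h

theorem exists_isSymmetric_sub_mul_vander_mem [IsDomain R] [Algebra ℚ R]
    {I : Ideal (MvPolynomial (Fin r) R)} {f : MvPolynomial (Fin r) R}
    (hf : ∀ w : Perm (Fin r), rename w f - (Perm.sign w : ℤ) • f ∈ I) :
    ∃ P : MvPolynomial (Fin r) R, P.IsSymmetric ∧ f - P * vander R r ∈ I := by
  have : CharZero R := charZero_of_injective_algebraMap (algebraMap ℚ R).injective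
  obtain ⟨P, hP, hfP⟩ := (isAlternating_antisymmetrization f).exists_isSymmetric_eq_mul_vander
  have hmem := antisymmetrization_sub_nsmul_mem hf
  rw [Fintype.card_fin] at hmem
  have hk : ((r.factorial : ℚ)⁻¹ • r.factorial • f) = f := by
    rw [← Nat.cast_smul_eq_nsmul ℚ, smul_smul, inv_mul_cancel₀ (by positivity), one_smul]
  refine ⟨(r.factorial : ℚ)⁻¹ • P, fun w => by rw [map_rat_smul, hP w], ?_⟩
  have h : f - ((r.factorial : ℚ)⁻¹ • P) * vander R r =
      -((r.factorial : ℚ)⁻¹ • (antisymmetrization f - r.factorial • f)) := by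
    rw [smul_mul_assoc, ← hfP, smul_sub, hk]
    abel
  rw [h]
  exact I.neg_mem (Submodule.smul_of_tower_mem I _ hmem)

end Vandermonde

end MvPolynomial

theorem thetabar_image_general (n r : ℕ)
    (f : MvPolynomial (Fin r) (Polynomial ℂ))
    (hf : ∀ w : Equiv.Perm (Fin r),
      rename (⇑w) f - ((Equiv.Perm.sign w : ℤ) : ℤ) • f ∈
        IP (Polynomial ℂ) r n ((-1) ^ (r - 1) * Polynomial.X)) :
    ∃ P : MvPolynomial (Fin r) (Polynomial ℂ), P.IsSymmetric ∧
      f - P * vander (Polynomial ℂ) r ∈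
        IP (Polynomial ℂ) r n ((-1) ^ (r - 1) * Polynomial.X) :=
  exists_isSymmetric_sub_mul_vander_mem hf

/-- Image characterization of `θ̄` from Section 2: working over `ℂ[q]` with
`c = (-1)^{r-1} q`, if `f ∈ ℂ[q][x₁,…,x_r]` is anti-symmetric modulo
`I_P(c) = ⟨x₁ⁿ - c, …, x_rⁿ - c⟩` (i.e. for every permutation `w` of the variables
`w·f - sgn(w)·f ∈ I_P(c)`), then there exists a polynomial `P`, symmetric in
`x₁, …, x_r`, with `f - P·Δ ∈ I_P(c)`. -/
theorem thetabar_image (n r : ℕ) (hr : 1 ≤ r) (hrn : r ≤ n)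
    (f : MvPolynomial (Fin r) (Polynomial ℂ))
    (hf : ∀ w : Equiv.Perm (Fin r),
      rename (⇑w) f - ((Equiv.Perm.sign w : ℤ) : ℤ) • f ∈
        IP (Polynomial ℂ) r n ((-1) ^ (r - 1) * Polynomial.X)) :
    ∃ P : MvPolynomial (Fin r) (Polynomial ℂ), P.IsSymmetric ∧
      f - P * vander (Polynomial ℂ) r ∈
        IP (Polynomial ℂ) r n ((-1) ^ (r - 1) * Polynomial.X) :=
  thetabar_image_general n r f hf
end

section
/- Fix integers 1 ≤ r ≤ n. Let μ and ν be partitions with at most r parts, all parts at most n − r. Then the coefficient of the monomial x₁^{n−1}·x₂^{n−1}⋯x_r^{n−1} in the polynomial D_{μ+δ} · D_{ν+δ} ∈ ℂ[x₁,…,x_r] equals (−1)^{r(r−1)/2} · r! if ν = μ̌ (i.e. ν_i = (n−r) − μ_{r+1−i} for all 1 ≤ i ≤ r), and equals 0 otherwise. -/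
/-! Expanding both alternants, `D_a · D_b = ∑_{σ,τ} sgn σ sgn τ · x^{a ∘ σ⁻¹ + b ∘ τ⁻¹}`. For the
strictly decreasing exponent sequences `a = μ + δ` and `b = ν + δ`, the sum `a ∘ σ⁻¹ + b ∘ τ⁻¹`
can only be constant if `τ⁻¹ σ` reverses the order, i.e. `τ = σ ∘ rev`; the constant is then
`n - 1` exactly when `ν = μ̌`. Each of the `r!` surviving terms contributes
`sgn rev = (-1)^{r(r-1)/2}`. -/

open Finset MvPolynomial
open scoped Classical

/-- `Dalpha r α = det (xᵢ^{αⱼ})_{1 ≤ i,j ≤ r}`. -/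
noncomputable def Dalpha (r : ℕ) (α : Fin r → ℕ) : MvPolynomial (Fin r) ℂ :=
  Matrix.det (Matrix.of fun i j : Fin r => X i ^ α j)

open Equiv

theorem Fin.revPerm_succ (n : ℕ) :
    (revPerm : Perm (Fin (n + 1))) = Perm.decomposeFin.symm (0, revPerm) * finRotate (n + 1) := by
  ext x
  induction x using Fin.lastCases with
  | last => simp
  | cast i => simp [Fin.rev_castSucc, Perm.decomposeFin_symm_apply_succ]

theorem Fin.sign_revPerm (n : ℕ) :
    Perm.sign (revPerm : Perm (Fin n)) = (-1) ^ n.choose 2 := by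
  induction n with
  | zero => rfl
  | succ n ih =>
    rw [revPerm_succ, map_mul, Perm.decomposeFin.symm_sign, if_pos rfl, ih, sign_finRotate,
      Nat.choose_succ_succ', Nat.choose_one_right, pow_add, Nat.add_sub_cancel, one_mul, mul_comm]

theorem Equiv.Perm.eq_revPerm_of_strictAnti {n : ℕ} {π : Perm (Fin n)} (h : StrictAnti π) :
    π = Fin.revPerm :=
  Equiv.ext fun x => by simpa using congrFun (h.comp Fin.rev_strictAnti).eq_id x.rev

section ConstantSum

variable {M : Type*} [AddCommMonoid M] [LinearOrder M] [IsOrderedCancelAddMonoid M]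
  {r : ℕ} {a b : Fin r → M}

theorem eq_revPerm_of_add_apply_eq (ha : StrictAnti a) (hb : StrictAnti b) {π : Perm (Fin r)}
    {c : M} (h : ∀ j, a j + b (π j) = c) : π = Fin.revPerm :=
  Perm.eq_revPerm_of_strictAnti fun i j hij => hb.lt_iff_gt.mp <| lt_of_not_ge fun hle =>
    (add_lt_add_of_lt_of_le (ha hij) hle).ne (by rw [h, h])

theorem add_apply_inv_eq_iff (ha : StrictAnti a) (hb : StrictAnti b) (σ τ : Perm (Fin r)) (c : M) :
    (∀ k, a (σ⁻¹ k) + b (τ⁻¹ k) = c) ↔ τ = σ * Fin.revPerm ∧ ∀ j, a j + b j.rev = c := by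
  have hrev : (Fin.revPerm : Perm (Fin r))⁻¹ = Fin.revPerm := Fin.revPerm_symm
  rw [σ.surjective.forall]
  simp only [← Perm.mul_apply, inv_mul_cancel, Perm.one_apply]
  constructor
  · intro h
    have hπ := eq_revPerm_of_add_apply_eq ha hb h
    refine ⟨?_, by simpa [hπ] using h⟩
    rw [← hrev, ← hπ]
    group
  · rintro ⟨rfl, h⟩
    simpa [mul_inv_rev, hrev] using h

end ConstantSum

theorem Antitone.strictAnti_add_delta {r : ℕ} {μ : Fin r → ℕ} (hμ : Antitone μ) :
    StrictAnti fun j : Fin r => μ j + (r - 1 - (j : ℕ)) := by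
  intro i j hij
  dsimp only
  have := hμ hij.le
  have : (i : ℕ) < j := hij
  have := j.isLt
  omega

theorem add_delta_add_rev_eq_iff {n r : ℕ} (hrn : r ≤ n) {μ : Fin r → ℕ} (ν : Fin r → ℕ)
    (hμ : ∀ i, μ i ≤ n - r) :
    (∀ j : Fin r, μ j + (r - 1 - (j : ℕ)) + (ν j.rev + (r - 1 - (j.rev : ℕ))) = n - 1) ↔
      ∀ i, ν i = n - r - μ i.rev := by
  conv_rhs => rw [Fin.rev_surjective.forall]
  refine forall_congr' fun j => ?_
  have := hμ j
  simp only [Fin.rev_rev, Fin.val_rev]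
  omega

theorem Dalpha_eq_sum_monomial (r : ℕ) (α : Fin r → ℕ) :
    Dalpha r α = ∑ σ : Perm (Fin r),
      monomial (Finsupp.equivFunOnFinite.symm fun k => α (σ⁻¹ k)) ((Perm.sign σ : ℤ) : ℂ) := by
  rw [Dalpha, Matrix.det_apply']
  refine sum_congr rfl fun σ _ => ?_
  rw [monomial_eq, Finsupp.prod_fintype _ _ (fun _ => pow_zero _), map_intCast]
  congr 1
  simpa using Equiv.prod_comp σ fun k => (X k ^ α (σ⁻¹ k) : MvPolynomial (Fin r) ℂ)

theorem coeff_Dalpha_mul_Dalpha (r : ℕ) (a b d : Fin r → ℕ) :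
    coeff (Finsupp.equivFunOnFinite.symm d) (Dalpha r a * Dalpha r b) =
      ∑ σ : Perm (Fin r), ∑ τ : Perm (Fin r),
        if ∀ k, a (σ⁻¹ k) + b (τ⁻¹ k) = d k then ((Perm.sign σ * Perm.sign τ : ℤˣ) : ℂ) else 0 := by
  rw [Dalpha_eq_sum_monomial, Dalpha_eq_sum_monomial, sum_mul_sum, coeff_sum]
  refine sum_congr rfl fun σ _ => ?_
  rw [coeff_sum]
  refine sum_congr rfl fun τ _ => ?_
  rw [monomial_mul, coeff_monomial]
  congr 1
  · simp [Finsupp.ext_iff]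
  · push_cast; rfl

theorem sum_sum_ite_eq_mul_revPerm {R : Type*} [Ring R] (r : ℕ) :
    (∑ σ : Perm (Fin r), ∑ τ : Perm (Fin r),
      if τ = σ * Fin.revPerm then ((Perm.sign σ * Perm.sign τ : ℤˣ) : R) else 0) =
      r.factorial * ((Perm.sign (Fin.revPerm : Perm (Fin r)) : ℤˣ) : R) := by
  have hsign (σ : Perm (Fin r)) :
      Perm.sign σ * Perm.sign (σ * Fin.revPerm) = Perm.sign (Fin.revPerm : Perm (Fin r)) := by
    rw [map_mul, ← mul_assoc, Int.units_mul_self, one_mul]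
  simp only [sum_ite_eq', mem_univ, if_true, hsign]
  simp [Fintype.card_perm]

theorem schur_orthogonality_general (n r : ℕ) (hrn : r ≤ n)
    (μ ν : Fin r → ℕ) (hμa : Antitone μ) (hνa : Antitone ν)
    (hμ : ∀ i, μ i ≤ n - r) :
    MvPolynomial.coeff (Finsupp.equivFunOnFinite.symm fun _ : Fin r => n - 1)
        (Dalpha r (fun j => μ j + (r - 1 - (j : ℕ))) *
          Dalpha r (fun j => ν j + (r - 1 - (j : ℕ)))) =
      if ∀ i : Fin r, ν i = (n - r) - μ i.rev then
        (-1 : ℂ) ^ (r * (r - 1) / 2) * (r.factorial : ℂ)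
      else 0 := by
  rw [coeff_Dalpha_mul_Dalpha]
  simp_rw [add_apply_inv_eq_iff hμa.strictAnti_add_delta hνa.strictAnti_add_delta,
    add_delta_add_rev_eq_iff hrn ν hμ]
  split_ifs with hcompl
  · simp only [hcompl, implies_true, and_true]
    rw [sum_sum_ite_eq_mul_revPerm, Fin.sign_revPerm, Nat.choose_two_right]
    push_cast
    ring
  · simp [hcompl]

/-- Orthogonality from Section 2: for partitions `μ, ν` in the `r × (n-r)` rectangle,
the coefficient of `x₁^{n-1} ⋯ x_r^{n-1}` in `D_{μ+δ} · D_{ν+δ}` is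
`(-1)^{r(r-1)/2} r!` if `ν = μ̌` (the complement of `μ` in the rectangle,
`νᵢ = (n-r) - μ_{r+1-i}`), and is `0` otherwise. -/
theorem schur_orthogonality (n r : ℕ) (hr : 1 ≤ r) (hrn : r ≤ n)
    (μ ν : Fin r → ℕ) (hμa : Antitone μ) (hνa : Antitone ν)
    (hμ : ∀ i, μ i ≤ n - r) (hν : ∀ i, ν i ≤ n - r) :
    MvPolynomial.coeff (Finsupp.equivFunOnFinite.symm fun _ : Fin r => n - 1)
        (Dalpha r (fun j => μ j + (r - 1 - (j : ℕ))) *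
          Dalpha r (fun j => ν j + (r - 1 - (j : ℕ)))) =
      if ∀ i : Fin r, ν i = (n - r) - μ i.rev then
        (-1 : ℂ) ^ (r * (r - 1) / 2) * (r.factorial : ℂ)
      else 0 :=
  schur_orthogonality_general n r hrn μ ν hμa hνa hμ
end

section
/- For all integers n ≥ 1 and d ≥ 0, the complex-valued function f(x) := Σ_{m=0}^{d} (x + 2m − d) / ( x · ((d−m)!)^n · ∏_{l=1}^{m} (x + l)^n ), defined for x ≠ 0 in a punctured neighborhood of 0 in ℂ, tends as x → 0 (through nonzero values) to the limit (1 / (2·(d!)^n)) · Σ_{m=0}^{d} C(d,m)^n · ( n·(d − 2m)·(γ(m) − γ(d−m)) + 2 ). -/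
open Finset Filter

/-!
Multiplying by `x`, the function becomes `G(x) = Σ_m (x + 2m - d) / ((d-m)!^n P_m(x)^n)` with
`P_m(x) = ∏_{l=1}^m (x + l)`, which is regular at `0`. The substitution `m ↦ d - m` changes the
sign of every term of `G(0)`, so `G(0) = 0` and the limit is `G'(0)`. Since the logarithmic
derivative of `P_m` at `0` is `γ(m)`, the quotient rule gives
`G'(0) = Σ_m (1 + n (d - 2m) γ(m)) / ((d-m)!^n m!^n)`; writing `1/((d-m)! m!) = C(d,m)/d!` and
averaging this sum with its reflection `m ↦ d - m` gives the stated form.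
-/

open Nat

theorem gam_succ (m : ℕ) : gam (m + 1) = gam m + 1 / (m + 1) := by
  simp [gam, sum_range_succ]

theorem sum_range_succ_reflect {M : Type*} [AddCommMonoid M] (f : ℕ → M) (d : ℕ) :
    ∑ m ∈ range (d + 1), f (d - m) = ∑ m ∈ range (d + 1), f m := by
  simpa using sum_range_reflect f (d + 1)

theorem sum_range_succ_eq_zero_of_reflect_eq_neg {K : Type*} [Field K] [CharZero K]
    {f : ℕ → K} {d : ℕ} (h : ∀ m ≤ d, f (d - m) = -f m) : ∑ m ∈ range (d + 1), f m = 0 := by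
  have hsum := sum_range_succ_reflect f d
  rw [sum_congr rfl fun m hm => h m (mem_range_succ_iff.mp hm), sum_neg_distrib] at hsum
  exact neg_eq_self.mp hsum

theorem prod_Icc_one_natCast {R : Type*} [CommSemiring R] (m : ℕ) :
    ∏ l ∈ Icc 1 m, (l : R) = m ! := by
  rw [← Nat.cast_prod, ← Finset.Ico_add_one_right_eq_Icc, prod_Ico_id_eq_factorial]

section

variable {𝕜 : Type*} [NontriviallyNormedField 𝕜] [CharZero 𝕜]

theorem hasDerivAt_prod_Icc_add (m : ℕ) :
    HasDerivAt (fun x : 𝕜 => ∏ l ∈ Icc 1 m, (x + l)) (m ! * gam m) 0 := by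
  induction m with
  | zero => simpa [gam] using hasDerivAt_const (0 : 𝕜) (1 : 𝕜)
  | succ m ih =>
    simp_rw [prod_Icc_succ_top (Nat.le_add_left 1 m)]
    refine (ih.fun_mul ((hasDerivAt_id' (0 : 𝕜)).add_const ((m + 1 : ℕ) : 𝕜))).congr_deriv ?_
    simp only [prod_Icc_one_natCast, zero_add, gam_succ, Nat.factorial_succ]
    push_cast
    field_simp

theorem hasDerivAt_inv_prod_Icc_add_pow (n m : ℕ) :
    HasDerivAt (fun x : 𝕜 => ((∏ l ∈ Icc 1 m, (x + l)) ^ n)⁻¹)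
      (-(n * gam m) / (m ! : 𝕜) ^ n) 0 := by
  refine (((hasDerivAt_prod_Icc_add m).fun_pow n).fun_inv
    (by simp [prod_Icc_one_natCast, Nat.factorial_ne_zero])).congr_deriv ?_
  simp only [zero_add, prod_Icc_one_natCast]
  rcases n with _ | n
  · simp
  · have : (m ! : 𝕜) ≠ 0 := Nat.cast_ne_zero.mpr m.factorial_ne_zero
    simp only [Nat.add_sub_cancel]
    field_simp
    ring

/-- `G(x) = x f(x)`, for the function `f` whose limit is taken. -/
noncomputable def coeffNumerator (n d : ℕ) (x : 𝕜) : 𝕜 :=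
  ∑ m ∈ range (d + 1),
    (x + 2 * m - d) * ((((d - m)! : 𝕜) ^ n)⁻¹ * ((∏ l ∈ Icc 1 m, (x + l)) ^ n)⁻¹)

theorem coeffNumerator_zero (n d : ℕ) : coeffNumerator n d (0 : 𝕜) = 0 := by
  refine sum_range_succ_eq_zero_of_reflect_eq_neg fun m hm => ?_
  simp only [zero_add, prod_Icc_one_natCast, Nat.sub_sub_self hm, Nat.cast_sub hm]
  ring

theorem hasDerivAt_coeffNumerator (n d : ℕ) :
    HasDerivAt (coeffNumerator n d)
      (∑ m ∈ range (d + 1), (1 + (d - 2 * m) * n * gam m) / (((d - m)! : 𝕜) ^ n * (m ! : 𝕜) ^ n))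
      0 := by
  refine HasDerivAt.fun_sum fun m _ => ?_
  have hlin : HasDerivAt (fun x : 𝕜 => x + 2 * m - d) 1 0 :=
    ((hasDerivAt_id' 0).add_const _).sub_const _
  refine (hlin.fun_mul ((hasDerivAt_inv_prod_Icc_add_pow n m).const_mul _)).congr_deriv ?_
  have : (m ! : 𝕜) ≠ 0 := Nat.cast_ne_zero.mpr m.factorial_ne_zero
  have : ((d - m)! : 𝕜) ≠ 0 := Nat.cast_ne_zero.mpr (d - m).factorial_ne_zero
  simp only [zero_add, prod_Icc_one_natCast]
  field_simp
  ring

end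

theorem sum_div_factorial_pow_eq {K : Type*} [Field K] [CharZero K] (n d : ℕ) :
    ∑ m ∈ range (d + 1), (1 + (d - 2 * m) * n * gam m) / (((d - m)! : K) ^ n * (m ! : K) ^ n) =
      1 / (2 * (d ! : K) ^ n) *
        ∑ m ∈ range (d + 1),
          (d.choose m : K) ^ n * (n * (d - 2 * m) * (gam m - gam (d - m)) + 2) := by
  set t : ℕ → K := fun m => (d.choose m : K) ^ n * (1 + (d - 2 * m) * n * gam m)
  have hsplit : ∀ m ∈ range (d + 1),
      (d.choose m : K) ^ n * (n * (d - 2 * m) * (gam m - gam (d - m)) + 2) = t m + t (d - m) := by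
    intro m hm
    rw [mem_range_succ_iff] at hm
    simp only [t, Nat.choose_symm hm, Nat.cast_sub hm]
    ring
  have hterm : ∀ m ∈ range (d + 1),
      (1 + (d - 2 * m) * n * gam m) / (((d - m)! : K) ^ n * (m ! : K) ^ n) =
        t m / (d ! : K) ^ n := by
    intro m hm
    rw [mem_range_succ_iff] at hm
    have hfac : (d.choose m : K) * m ! * (d - m)! = d ! := by
      exact_mod_cast Nat.choose_mul_factorial_mul_factorial hm
    have : (m ! : K) ≠ 0 := Nat.cast_ne_zero.mpr m.factorial_ne_zero
    have : ((d - m)! : K) ≠ 0 := Nat.cast_ne_zero.mpr (d - m).factorial_ne_zero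
    have : (d.choose m : K) ≠ 0 := Nat.cast_ne_zero.mpr (Nat.choose_pos hm).ne'
    rw [← hfac]
    field_simp
    simp only [t]
    ring
  rw [sum_congr rfl hterm, sum_congr rfl hsplit, sum_add_distrib,
    sum_range_succ_reflect t, ← sum_div]
  ring

theorem constant_term_limit_general (n d : ℕ) :
    Tendsto
      (fun x : ℂ => ∑ m ∈ Finset.range (d + 1),
        (x + 2 * (m : ℂ) - (d : ℂ)) /
          (x * ((((d - m).factorial : ℂ)) ^ n) * ∏ l ∈ Finset.Icc 1 m, (x + (l : ℂ)) ^ n))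
      (nhdsWithin 0 {(0 : ℂ)}ᶜ)
      (nhds ((1 / (2 * ((d.factorial : ℂ)) ^ n)) *
        ∑ m ∈ Finset.range (d + 1), (d.choose m : ℂ) ^ n *
          ((n : ℂ) * ((d : ℂ) - 2 * m) * (((gam m : ℚ) : ℂ) - ((gam (d - m) : ℚ) : ℂ)) + 2))) := by
  have hslope := (hasDerivAt_coeffNumerator (𝕜 := ℂ) n d).tendsto_slope_zero
  simp only [zero_add, coeffNumerator_zero, sub_zero, smul_eq_mul] at hslope
  rw [← sum_div_factorial_pow_eq]
  refine hslope.congr fun x => ?_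
  simp only [coeffNumerator, mul_sum, prod_pow, div_eq_mul_inv, mul_inv]
  exact sum_congr rfl fun m _ => by ring

/-- Extraction of the constant term of the degree-`d` coefficient of the `J`-function of
`G(2,n)` (Section 3): for `n ≥ 1` and `d ≥ 0`, the function
`f(x) = Σ_{m=0}^d (x + 2m - d)/(x ((d-m)!)^n ∏_{l=1}^m (x+l)^n)` tends, as `x → 0`
through nonzero values, to
`(1/(2 (d!)^n)) Σ_{m=0}^d C(d,m)^n (n (d-2m)(γ(m) - γ(d-m)) + 2)`. -/
theorem constant_term_limit (n d : ℕ) (hn : 1 ≤ n) :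
    Tendsto
      (fun x : ℂ => ∑ m ∈ Finset.range (d + 1),
        (x + 2 * (m : ℂ) - (d : ℂ)) /
          (x * ((((d - m).factorial : ℂ)) ^ n) * ∏ l ∈ Finset.Icc 1 m, (x + (l : ℂ)) ^ n))
      (nhdsWithin 0 {(0 : ℂ)}ᶜ)
      (nhds ((1 / (2 * ((d.factorial : ℂ)) ^ n)) *
        ∑ m ∈ Finset.range (d + 1), (d.choose m : ℂ) ^ n *
          ((n : ℂ) * ((d : ℂ) - 2 * m) * (((gam m : ℚ) : ℂ) - ((gam (d - m) : ℚ) : ℂ)) + 2))) :=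
  constant_term_limit_general n d
end
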